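/- HLG-WL is not less powerful than FR-WL: the augmentation from FR(G) to HLG(G), which adds edges between intersecting fragments, is reversible (original structure recoverable from node features), so every pair of graphs distinguishable by FR-WL is distinguishable by HLG-WL. -/

import Mathlib

/-- The type of Weisfeiler-Leman colors after `t` iterations, starting from features in `F`.
The injective hash function is modeled by pairing: a color at iteration `t+1` is the pair of
the previous color and the multiset of the previous colors of the neighbors. -/
def WLColor (F : Type*) : ℕ → Type _
  | 0 => F
  | t + 1 => WLColor F t × Multiset (WLColor F t)

/-- The WL coloring of a graph `G` with node features `X` at iteration `t`:
`c_v^(0) = hash X_v` and `c_v^(t) = hash (c_v^(t-1), {{c_w^(t-1) | w ∈ N(v)}})`,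
with the injective hash realized by pairing. -/
def wl {V F : Type*} [Fintype V] (G : SimpleGraph V) [DecidableRel G.Adj] (X : V → F) :
    (t : ℕ) → V → WLColor F t
  | 0 => X
  | t + 1 => fun v => (wl G X t v, (G.neighborFinset v).val.map (wl G X t))


/-- A simple graph built from a boolean relation (symmetrized, loops removed). -/
def boolGraph {α : Type*} (r : α → α → Bool) : SimpleGraph α :=
  SimpleGraph.fromRel fun a b => r a b = true

instance {α : Type*} [DecidableEq α] (r : α → α → Bool) : DecidableRel (boolGraph r).Adj :=
  fun a b => decidable_of_iff _ (SimpleGraph.fromRel_adj _ a b).symm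

/-- A representative of a finite graph structure: a number of nodes and an adjacency matrix. -/
def GraphRep : Type := Σ n : ℕ, Fin n → Fin n → Bool

/-- Two representatives are isomorphic if some equivalence of the vertices preserves
adjacency. -/
def repIso (a b : GraphRep) : Prop :=
  ∃ e : Fin a.1 ≃ Fin b.1, ∀ i j, a.2 i j = b.2 (e i) (e j)

/-- Isomorphism classes of finite graph structures; the `type` of a fragment lives here. -/
def IsoClass : Type := Quot repIso

variable {V F : Type*}

/-- The type of a fragment `f` of a graph `G`: the isomorphism class of the induced
subgraph `G[f]`. -/
noncomputable def fragType [DecidableEq V] (G : SimpleGraph V) [DecidableRel G.Adj]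
    (f : Finset V) : IsoClass :=
  Quot.mk _ ⟨f.card, fun i j => decide (G.Adj (f.equivFin.symm i : V) (f.equivFin.symm j : V))⟩

/-- The node features of `NF(G)`: the original feature concatenated with the multiset of types
of the fragments containing the node. -/
noncomputable def nfX [DecidableEq V] (G : SimpleGraph V) [DecidableRel G.Adj]
    (Fr : Finset (Finset V)) (X : V → F) : V → F × Multiset IsoClass :=
  fun v => (X v, ((Fr.filter fun f => v ∈ f).val.map (fragType G)))

/-- The relation underlying `FR(G)`: original edges, and each fragment node is adjacent to the
nodes it contains. -/
def frRel [DecidableEq V] (G : SimpleGraph V) [DecidableRel G.Adj] (Fr : Finset (Finset V)) :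
    (V ⊕ Fr) → (V ⊕ Fr) → Bool
  | Sum.inl u, Sum.inl v => decide (G.Adj u v)
  | Sum.inl v, Sum.inr f => decide (v ∈ (f : Finset V))
  | Sum.inr f, Sum.inl v => decide (v ∈ (f : Finset V))
  | Sum.inr _, Sum.inr _ => false

/-- The fragment-representation augmented graph `FR(G)`. -/
def FRGraph [DecidableEq V] (G : SimpleGraph V) [DecidableRel G.Adj]
    (Fr : Finset (Finset V)) : SimpleGraph (V ⊕ Fr) :=
  boolGraph (frRel G Fr)

instance [DecidableEq V] (G : SimpleGraph V) [DecidableRel G.Adj] (Fr : Finset (Finset V)) :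
    DecidableRel (FRGraph G Fr).Adj :=
  inferInstanceAs (DecidableRel (boolGraph (frRel G Fr)).Adj)

/-- The relation underlying `HLG(G)`: as `FR(G)`, plus edges between distinct intersecting
fragments. -/
def hlgRel [DecidableEq V] (G : SimpleGraph V) [DecidableRel G.Adj] (Fr : Finset (Finset V)) :
    (V ⊕ Fr) → (V ⊕ Fr) → Bool
  | Sum.inl u, Sum.inl v => decide (G.Adj u v)
  | Sum.inl v, Sum.inr f => decide (v ∈ (f : Finset V))
  | Sum.inr f, Sum.inl v => decide (v ∈ (f : Finset V))
  | Sum.inr f, Sum.inr k => decide (f ≠ k) && decide (((f : Finset V) ∩ (k : Finset V)).Nonempty)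

/-- The higher-level-graph augmentation `HLG(G)`. -/
def HLGGraph [DecidableEq V] (G : SimpleGraph V) [DecidableRel G.Adj]
    (Fr : Finset (Finset V)) : SimpleGraph (V ⊕ Fr) :=
  boolGraph (hlgRel G Fr)

instance [DecidableEq V] (G : SimpleGraph V) [DecidableRel G.Adj] (Fr : Finset (Finset V)) :
    DecidableRel (HLGGraph G Fr).Adj :=
  inferInstanceAs (DecidableRel (boolGraph (hlgRel G Fr)).Adj)

/-- The node features of `FR(G)` and `HLG(G)`: original features on original vertices, the
fragment's type on fragment nodes. -/
noncomputable def frX [DecidableEq V] (G : SimpleGraph V) [DecidableRel G.Adj]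
    (Fr : Finset (Finset V)) (X : V → F) : (V ⊕ Fr) → F ⊕ IsoClass :=
  Sum.elim (fun v => Sum.inl (X v)) (fun f => Sum.inr (fragType G (f : Finset V)))

/-! A WL color remembers the initial feature of its node. If the smaller graph's edges are
exactly those edges of the larger graph that a predicate on the endpoint features keeps, then
replacing each neighbour multiset by its sub-multiset of kept colours, recursively, turns the WL
colour of the larger graph into that of the smaller one. `FR(G)` arises from `HLG(G)` in this
way: it keeps the edges with an endpoint carrying an original (`Sum.inl`) feature. Equal colour
histograms for HLG-WL therefore map to equal histograms for FR-WL. -/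

namespace WLColor

def base : (t : ℕ) → WLColor F t → F
  | 0, x => x
  | t + 1, c => base t c.1

def restrict (keep : F → F → Bool) : (t : ℕ) → WLColor F t → WLColor F t
  | 0, c => c
  | t + 1, c =>
    (restrict keep t c.1,
      (c.2.filter fun d => keep (base t c.1) (base t d)).map (restrict keep t))

end WLColor

open WLColor

section Restrict

variable [Fintype V] (X : V → F)

theorem base_wl (G : SimpleGraph V) [DecidableRel G.Adj] :
    ∀ (t : ℕ) (v : V), base t (wl G X t v) = X v
  | 0, _ => rfl
  | t + 1, v => base_wl G t v

variable {G G' : SimpleGraph V} [DecidableRel G.Adj] [DecidableRel G'.Adj]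

theorem neighborFinset_eq_filter_of_adj_iff {keep : F → F → Bool}
    (hadj : ∀ a b, G.Adj a b ↔ G'.Adj a b ∧ keep (X a) (X b)) (a : V) :
    G.neighborFinset a = (G'.neighborFinset a).filter fun b => keep (X a) (X b) := by
  ext b
  simp [hadj]

theorem restrict_wl {keep : F → F → Bool}
    (hadj : ∀ a b, G.Adj a b ↔ G'.Adj a b ∧ keep (X a) (X b)) :
    ∀ (t : ℕ) (a : V), restrict keep t (wl G' X t a) = wl G X t a
  | 0, _ => rfl
  | t + 1, a => by
    refine Prod.ext (restrict_wl hadj t a) ?_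
    change Multiset.map _ (Multiset.filter (fun d => keep (base t (wl G' X t a)) (base t d))
      ((G'.neighborFinset a).val.map (wl G' X t))) = (G.neighborFinset a).val.map (wl G X t)
    rw [neighborFinset_eq_filter_of_adj_iff X hadj, Finset.filter_val, Multiset.filter_map,
      Multiset.map_map]
    simp only [Function.comp_def, base_wl]
    exact Multiset.map_congr rfl fun b _ => restrict_wl hadj t b

theorem wl_histogram_eq_map_restrict {keep : F → F → Bool}
    (hadj : ∀ a b, G.Adj a b ↔ G'.Adj a b ∧ keep (X a) (X b)) (t : ℕ) :
    Finset.univ.val.map (wl G X t) =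
      (Finset.univ.val.map (wl G' X t)).map (restrict keep t) := by
  rw [Multiset.map_map]
  exact Multiset.map_congr rfl fun a _ => (restrict_wl X hadj t a).symm

end Restrict

def keepOriginal (x y : F ⊕ IsoClass) : Bool :=
  x.isLeft || y.isLeft

theorem frGraph_adj_iff_hlgGraph_adj [DecidableEq V] (G : SimpleGraph V)
    [DecidableRel G.Adj] (Fr : Finset (Finset V)) (X : V → F) (a b : V ⊕ Fr) :
    (FRGraph G Fr).Adj a b ↔
      (HLGGraph G Fr).Adj a b ∧ keepOriginal (frX G Fr X a) (frX G Fr X b) := by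
  cases a <;> cases b <;>
    simp [FRGraph, HLGGraph, boolGraph, frRel, hlgRel, keepOriginal, frX]

/-- HLG-WL is not less powerful than FR-WL: the augmentation from `FR(G)` to `HLG(G)` (adding
edges between intersecting fragments) is reversible — from the node features one can recognize
fragment nodes, so the original `FR`-edges are recoverable — hence the HLG-WL coloring at every
iteration refines the FR-WL coloring (uniformly in the graph), and every pair of graphs
distinguishable by FR-WL is distinguishable by HLG-WL. -/
theorem hlgwl_not_less_powerful_than_frwl (F : Type) :
    (∃ h : (t : ℕ) → WLColor (F ⊕ IsoClass) t → WLColor (F ⊕ IsoClass) t,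
      ∀ (V : Type) [Fintype V] [DecidableEq V] (G : SimpleGraph V) [DecidableRel G.Adj]
        (Fr : Finset (Finset V)) (X : V → F) (t : ℕ) (a : V ⊕ Fr),
        h t (wl (HLGGraph G Fr) (frX G Fr X) t a) = wl (FRGraph G Fr) (frX G Fr X) t a) ∧
    (∀ (V₁ V₂ : Type) [Fintype V₁] [DecidableEq V₁] [Fintype V₂] [DecidableEq V₂]
      (G₁ : SimpleGraph V₁) [DecidableRel G₁.Adj] (G₂ : SimpleGraph V₂) [DecidableRel G₂.Adj]
      (Fr₁ : Finset (Finset V₁)) (Fr₂ : Finset (Finset V₂)) (X₁ : V₁ → F) (X₂ : V₂ → F),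
      (∃ t : ℕ, (Finset.univ.val.map (wl (FRGraph G₁ Fr₁) (frX G₁ Fr₁ X₁) t)) ≠
          (Finset.univ.val.map (wl (FRGraph G₂ Fr₂) (frX G₂ Fr₂ X₂) t))) →
      ∃ t : ℕ, (Finset.univ.val.map (wl (HLGGraph G₁ Fr₁) (frX G₁ Fr₁ X₁) t)) ≠
          (Finset.univ.val.map (wl (HLGGraph G₂ Fr₂) (frX G₂ Fr₂ X₂) t))) := by
  refine ⟨⟨restrict keepOriginal, fun V _ _ G _ Fr X =>
    restrict_wl _ (frGraph_adj_iff_hlgGraph_adj G Fr X)⟩, ?_⟩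
  intro V₁ V₂ _ _ _ _ G₁ _ G₂ _ Fr₁ Fr₂ X₁ X₂ ⟨t, hne⟩
  refine ⟨t, fun heq => hne ?_⟩
  rw [wl_histogram_eq_map_restrict _ (frGraph_adj_iff_hlgGraph_adj G₁ Fr₁ X₁),
    wl_histogram_eq_map_restrict _ (frGraph_adj_iff_hlgGraph_adj G₂ Fr₂ X₂), heq]
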